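/- arXiv:2004.13963 — 3 statements merged into one kernel-verified Lean document; each statement's English description precedes it below -/
import Mathlib

section
/- Consider the design matrix X_γ with rows (1, x_j, (x_j-γ)_+·(x_j-γ)) where n q_0 visits are at x=0, n q_1 visits at x=γ, and n q_2 visits at x=1, with q_0,q_1,q_2 > 0 and γ in (0,1). Then X_γᵀX_γ is invertible and the (2,2) entry of σ²(X_γᵀX_γ)^{-1} equals (σ²/γ²)(1/(n q_0) + 1/(n q_1)). -/
/-!
The rows of `X` take only the three values `(1, 0, 0)`, `(1, γ, 0)`, `(1, 1, 1 - γ)`, so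
`XᵀX` is the sum of their outer products weighted by `n₀, n₁, n₂`, with determinant
`n₀ n₁ n₂ γ² (1 - γ)²`. By Cramer's rule the middle entry of its inverse is the cofactor
`(n₀ + n₁) n₂ (1 - γ)²` divided by the determinant, and the common factor `n₂ (1 - γ)²` cancels.
-/

open Matrix

theorem sum_fin_three_blocks {M : Type*} [AddCommMonoid M] (a b c : ℕ) (A B C : M) :
    ∑ k : Fin (a + b + c), (if (k : ℕ) < a then A else if (k : ℕ) < a + b then B else C) =
      a • A + b • B + c • C := by
  simp only [Fin.sum_univ_add, Fin.val_castAdd, Fin.val_natAdd]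
  have hA : ∀ i : Fin a, (i : ℕ) < a := fun i => i.isLt
  have hB : ∀ i : Fin b, ¬ a + (i : ℕ) < a ∧ a + (i : ℕ) < a + b := fun i => ⟨by omega, by omega⟩
  have hC : ∀ i : Fin c, ¬ a + b + (i : ℕ) < a ∧ ¬ a + b + (i : ℕ) < a + b :=
    fun i => ⟨by omega, by omega⟩
  simp [hA, hB, hC]

theorem transpose_mul_self_eq_sum_vecMulVec {ι m R : Type*} [Fintype ι] [Semiring R]
    (X : Matrix ι m R) : Xᵀ * X = ∑ k, vecMulVec (X k) (X k) := by
  ext i j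
  simp [mul_apply, vecMulVec_apply, Matrix.sum_apply]

theorem transpose_mul_self_of_three_blocks {m R : Type*} [Semiring R] {a b c : ℕ}
    (X : Matrix (Fin (a + b + c)) m R) (u v w : m → R)
    (hX : ∀ k, X k = if (k : ℕ) < a then u else if (k : ℕ) < a + b then v else w) :
    Xᵀ * X = a • vecMulVec u u + b • vecMulVec v v + c • vecMulVec w w := by
  rw [transpose_mul_self_eq_sum_vecMulVec, ← sum_fin_three_blocks]
  refine Finset.sum_congr rfl fun k _ => ?_
  rw [hX k]
  split_ifs <;> rfl

/-- Cramer's rule for the middle entry; for singular `A` both sides are `0`. -/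
theorem inv_apply_one_one_fin_three {K : Type*} [Field K] (A : Matrix (Fin 3) (Fin 3) K) :
    A⁻¹ 1 1 = (A 0 0 * A 2 2 - A 0 2 * A 2 0) / A.det := by
  rw [inv_def, Matrix.smul_apply, adjugate_fin_three, Ring.inverse_eq_inv', smul_eq_mul,
    div_eq_inv_mul]
  simp

def brokenStickGram (a b c : ℕ) (γ : ℝ) : Matrix (Fin 3) (Fin 3) ℝ :=
  a • vecMulVec ![1, 0, 0] ![1, 0, 0] + b • vecMulVec ![1, γ, 0] ![1, γ, 0] +
    c • vecMulVec ![1, 1, 1 - γ] ![1, 1, 1 - γ]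

theorem brokenStickGram_eq (a b c : ℕ) (γ : ℝ) :
    brokenStickGram a b c γ =
      !![(a : ℝ) + b + c, b * γ + c, c * (1 - γ);
        b * γ + c, b * γ ^ 2 + c, c * (1 - γ);
        c * (1 - γ), c * (1 - γ), c * (1 - γ) ^ 2] := by
  ext i j
  simp only [brokenStickGram, Matrix.add_apply, Matrix.smul_apply, vecMulVec_apply]
  fin_cases i <;> fin_cases j <;> simp [nsmul_eq_mul, sq]

theorem det_brokenStickGram (a b c : ℕ) (γ : ℝ) :
    (brokenStickGram a b c γ).det = a * b * c * γ ^ 2 * (1 - γ) ^ 2 := by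
  rw [brokenStickGram_eq, det_fin_three]
  simp only [of_apply, cons_val', cons_val_zero, cons_val_fin_one, cons_val_one, cons_val]
  ring

theorem brokenStickGram_inv_one_one {a b c : ℕ} (hc : c ≠ 0) {γ : ℝ} (hγ : γ ≠ 1) :
    (brokenStickGram a b c γ)⁻¹ 1 1 = (a + b) / (a * b * γ ^ 2) := by
  have hcγ : (c : ℝ) * (1 - γ) ^ 2 ≠ 0 := by
    have : (1 : ℝ) - γ ≠ 0 := sub_ne_zero.mpr hγ.symm
    positivity
  rw [inv_apply_one_one_fin_three, det_brokenStickGram, brokenStickGram_eq,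
    ← mul_div_mul_right ((a : ℝ) + b) (a * b * γ ^ 2) hcγ]
  congr 1
  · simp only [of_apply, cons_val', cons_val_zero, cons_val_fin_one, cons_val_one, cons_val]
    ring
  · ring

theorem stmt_7_general (γ σ : ℝ) (hγ : γ ∈ Set.Ioo (0 : ℝ) 1)
    (n0 n1 n2 : ℕ) (h0 : 0 < n0) (h1 : 0 < n1) (h2 : 0 < n2)
    (n : ℝ) (hn : n = (n0 : ℝ) + n1 + n2)
    (q0 q1 : ℝ) (hq0 : q0 = n0 / n) (hq1 : q1 = n1 / n)
    (xval : Fin (n0 + n1 + n2) → ℝ)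
    (hxval : ∀ i, xval i = if (i : ℕ) < n0 then 0 else if (i : ℕ) < n0 + n1 then γ else 1)
    (X : Matrix (Fin (n0 + n1 + n2)) (Fin 3) ℝ)
    (hX : ∀ i, X i = ![1, xval i, if γ ≤ xval i then xval i - γ else 0]) :
    IsUnit (Xᵀ * X).det ∧
    (σ ^ 2 • (Xᵀ * X)⁻¹) 1 1 = σ ^ 2 / γ ^ 2 * (1 / (n * q0) + 1 / (n * q1)) := by
  obtain ⟨hγ0, hγ1⟩ := hγ
  have hrows : ∀ k : Fin (n0 + n1 + n2), X k =
      if (k : ℕ) < n0 then ![1, 0, 0]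
      else if (k : ℕ) < n0 + n1 then ![1, γ, 0] else ![1, 1, 1 - γ] := by
    intro k
    rw [hX k, hxval k]
    split_ifs <;> simp_all [not_le.mpr hγ0, hγ1.le]
  have hgram : Xᵀ * X = brokenStickGram n0 n1 n2 γ :=
    transpose_mul_self_of_three_blocks X _ _ _ hrows
  have hn_pos : 0 < n := by rw [hn]; positivity
  have hnq0 : n * q0 = n0 := by rw [hq0]; field_simp
  have hnq1 : n * q1 = n1 := by rw [hq1]; field_simp
  refine ⟨?_, ?_⟩
  · rw [hgram, det_brokenStickGram, isUnit_iff_ne_zero]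
    have : (0 : ℝ) < 1 - γ := sub_pos.mpr hγ1
    positivity
  · rw [Matrix.smul_apply, hgram, brokenStickGram_inv_one_one h2.ne' hγ1.ne, hnq0, hnq1,
      smul_eq_mul]
    field_simp
    ring

/-- For the broken-stick design matrix with `n q₀` visits at 0, `n q₁` at γ and `n q₂` at 1,
`XᵀX` is invertible and the (2,2) entry of `σ²(XᵀX)⁻¹` equals `(σ²/γ²)(1/(n q₀) + 1/(n q₁))`. -/
theorem stmt_7 (γ σ : ℝ) (hγ : γ ∈ Set.Ioo (0 : ℝ) 1) (hσ : 0 < σ)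
    (n0 n1 n2 : ℕ) (h0 : 0 < n0) (h1 : 0 < n1) (h2 : 0 < n2)
    (n : ℝ) (hn : n = (n0 : ℝ) + n1 + n2)
    (q0 q1 q2 : ℝ) (hq0 : q0 = n0 / n) (hq1 : q1 = n1 / n) (hq2 : q2 = n2 / n)
    (xval : Fin (n0 + n1 + n2) → ℝ)
    (hxval : ∀ i, xval i = if (i : ℕ) < n0 then 0 else if (i : ℕ) < n0 + n1 then γ else 1)
    (X : Matrix (Fin (n0 + n1 + n2)) (Fin 3) ℝ)
    (hX : ∀ i, X i = ![1, xval i, if γ ≤ xval i then xval i - γ else 0]) :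
    IsUnit (Xᵀ * X).det ∧
    (σ ^ 2 • (Xᵀ * X)⁻¹) 1 1 = σ ^ 2 / γ ^ 2 * (1 / (n * q0) + 1 / (n * q1)) :=
  stmt_7_general γ σ hγ n0 n1 n2 h0 h1 h2 n hn q0 q1 hq0 hq1 xval hxval X hX
end

section
/- Under the same three-point design, the (3,3) entry of σ²(X_γᵀX_γ)^{-1} equals σ²/(γ²(1-γ)²) · ((1-γ)²/(n q_0) + 1/(n q_1) + γ²/(n q_2)). -/
/-!
Writing `V` for the 3×3 matrix whose rows are the three support points `(1,0,0)`, `(1,γ,0)`,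
`(1,1,1-γ)`, the Gram matrix factors as `XᵀX = Vᵀ diag(n₀,n₁,n₂) V`. Hence
`(XᵀX)⁻¹ = V⁻¹ diag(1/n₀,1/n₁,1/n₂) V⁻ᵀ`, whose (3,3) entry is `∑ₖ (V⁻¹)₂ₖ² / nₖ`. The last row of
`V⁻¹` is `(1/γ, -1/(γ(1-γ)), 1/(1-γ))`, which gives the three terms of the formula.
-/

open Matrix Finset

theorem transpose_submatrix_mul_submatrix {N ι κ R : Type*} [Fintype N] [Fintype ι]
    [DecidableEq ι] [CommSemiring R] (V : Matrix ι κ R) (s : N → ι) :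
    (V.submatrix s id)ᵀ * V.submatrix s id = Vᵀ * diagonal (fun k => (#{i | s i = k} : R)) * V := by
  ext a b
  rw [mul_apply, mul_apply]
  simp only [mul_diagonal, transpose_apply, submatrix_apply, id]
  rw [← Finset.sum_fiberwise Finset.univ s]
  refine Finset.sum_congr rfl fun k _ => ?_
  rw [Finset.sum_congr rfl fun i hi => by rw [(Finset.mem_filter.1 hi).2], Finset.sum_const,
    nsmul_eq_mul]
  ring

theorem mul_diagonal_inv_mul_transpose_mul_eq_one {m K : Type*} [Fintype m] [DecidableEq m]
    [Field K] {V W : Matrix m m K} (hWV : W * V = 1) {d : m → K} (hd : ∀ k, d k ≠ 0) :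
    W * diagonal d⁻¹ * Wᵀ * (Vᵀ * diagonal d * V) = 1 := by
  have hVW : Wᵀ * Vᵀ = 1 := by rw [← transpose_mul, mul_eq_one_comm.1 hWV, transpose_one]
  have hdd : diagonal d⁻¹ * diagonal d = 1 := by
    rw [diagonal_mul_diagonal, ← diagonal_one]
    exact congrArg diagonal (funext fun k => inv_mul_cancel₀ (hd k))
  calc W * diagonal d⁻¹ * Wᵀ * (Vᵀ * diagonal d * V)
      = W * (diagonal d⁻¹ * ((Wᵀ * Vᵀ) * diagonal d)) * V := by simp only [Matrix.mul_assoc]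
    _ = 1 := by rw [hVW, Matrix.one_mul, hdd, Matrix.mul_one, hWV]

theorem mul_diagonal_mul_transpose_apply_self {m n R : Type*} [Fintype n] [DecidableEq n]
    [CommSemiring R] (W : Matrix m n R) (e : n → R) (i : m) :
    (W * diagonal e * Wᵀ) i i = ∑ k, W i k ^ 2 * e k := by
  rw [mul_apply]
  simp only [mul_diagonal, transpose_apply]
  exact Finset.sum_congr rfl fun k _ => by ring

def blockLabel (n0 n1 i : ℕ) : Fin 3 := if i < n0 then 0 else if i < n0 + n1 then 1 else 2

theorem card_blockLabel (n0 n1 n2 : ℕ) (k : Fin 3) :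
    #{i : Fin (n0 + n1 + n2) | blockLabel n0 n1 i = k} = ![n0, n1, n2] k := by
  rw [Finset.card_filter, Fin.sum_univ_add, Fin.sum_univ_add]
  fin_cases k <;> simp [blockLabel, Nat.add_assoc]

def brokenStickSupport (γ : ℝ) : Matrix (Fin 3) (Fin 3) ℝ :=
  !![1, 0, 0; 1, γ, 0; 1, 1, 1 - γ]

noncomputable def brokenStickSupportInv (γ : ℝ) : Matrix (Fin 3) (Fin 3) ℝ :=
  !![1, 0, 0; -1 / γ, 1 / γ, 0; 1 / γ, -1 / (γ * (1 - γ)), 1 / (1 - γ)]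

theorem brokenStickSupportInv_mul {γ : ℝ} (h0 : γ ≠ 0) (h1 : 1 - γ ≠ 0) :
    brokenStickSupportInv γ * brokenStickSupport γ = 1 := by
  ext i j
  fin_cases i <;> fin_cases j <;>
    simp [brokenStickSupportInv, brokenStickSupport, mul_apply, Fin.sum_univ_three] <;>
    field_simp <;> ring

theorem stmt_9_general (γ σ : ℝ) (hγ : γ ∈ Set.Ioo (0 : ℝ) 1)
    (n0 n1 n2 : ℕ) (h0 : 0 < n0) (h1 : 0 < n1) (h2 : 0 < n2)
    (n : ℝ) (hn : n = (n0 : ℝ) + n1 + n2)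
    (q0 q1 q2 : ℝ) (hq0 : q0 = n0 / n) (hq1 : q1 = n1 / n) (hq2 : q2 = n2 / n)
    (xval : Fin (n0 + n1 + n2) → ℝ)
    (hxval : ∀ i, xval i = if (i : ℕ) < n0 then 0 else if (i : ℕ) < n0 + n1 then γ else 1)
    (X : Matrix (Fin (n0 + n1 + n2)) (Fin 3) ℝ)
    (hX : ∀ i, X i = ![1, xval i, if γ ≤ xval i then xval i - γ else 0]) :
    IsUnit (Xᵀ * X).det ∧
    (σ ^ 2 • (Xᵀ * X)⁻¹) 2 2 = σ ^ 2 / (γ ^ 2 * (1 - γ) ^ 2) * ((1 - γ) ^ 2 / (n * q0) + 1 / (n * q1) + γ ^ 2 / (n * q2)) := by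
  obtain ⟨hγ0, hγ1⟩ := hγ
  have hγ1' : 1 - γ ≠ 0 := sub_ne_zero.2 hγ1.ne'
  have hrows : X = (brokenStickSupport γ).submatrix
      (fun i : Fin (n0 + n1 + n2) => blockLabel n0 n1 i) id := by
    ext i j
    rw [submatrix_apply, hX, hxval, blockLabel]
    split_ifs <;> fin_cases j <;> simp [brokenStickSupport] <;> linarith
  set d : Fin 3 → ℝ := fun k => (![n0, n1, n2] k : ℕ)
  have hgram : Xᵀ * X = (brokenStickSupport γ)ᵀ * diagonal d * brokenStickSupport γ := by
    rw [hrows, transpose_submatrix_mul_submatrix]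
    simp only [card_blockLabel, d]
  have hd : ∀ k, d k ≠ 0 := by
    intro k; fin_cases k <;> simp [d] <;> omega
  have hleft := mul_diagonal_inv_mul_transpose_mul_eq_one
    (brokenStickSupportInv_mul hγ0.ne' hγ1') hd
  rw [hgram]
  refine ⟨isUnit_det_of_left_inverse hleft, ?_⟩
  have hn_ne : n ≠ 0 := by rw [hn]; positivity
  rw [inv_eq_left_inv hleft, Matrix.smul_apply, mul_diagonal_mul_transpose_apply_self,
    Fin.sum_univ_three, hq0, hq1, hq2, mul_div_cancel₀ _ hn_ne, mul_div_cancel₀ _ hn_ne,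
    mul_div_cancel₀ _ hn_ne]
  simp only [brokenStickSupportInv, d, of_apply, cons_val', cons_val_zero, cons_val_one,
    cons_val_fin_one, Matrix.cons_val, Pi.inv_apply, smul_eq_mul]
  field_simp

/-- For the broken-stick design matrix with `n q₀` visits at 0, `n q₁` at γ and `n q₂` at 1,
`XᵀX` is invertible and the (3,3) entry of `σ²(XᵀX)⁻¹` equals `σ²/(γ²(1-γ)²) ((1-γ)²/(nq₀) + 1/(nq₁) + γ²/(nq₂))`. -/
theorem stmt_9 (γ σ : ℝ) (hγ : γ ∈ Set.Ioo (0 : ℝ) 1) (hσ : 0 < σ)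
    (n0 n1 n2 : ℕ) (h0 : 0 < n0) (h1 : 0 < n1) (h2 : 0 < n2)
    (n : ℝ) (hn : n = (n0 : ℝ) + n1 + n2)
    (q0 q1 q2 : ℝ) (hq0 : q0 = n0 / n) (hq1 : q1 = n1 / n) (hq2 : q2 = n2 / n)
    (xval : Fin (n0 + n1 + n2) → ℝ)
    (hxval : ∀ i, xval i = if (i : ℕ) < n0 then 0 else if (i : ℕ) < n0 + n1 then γ else 1)
    (X : Matrix (Fin (n0 + n1 + n2)) (Fin 3) ℝ)
    (hX : ∀ i, X i = ![1, xval i, if γ ≤ xval i then xval i - γ else 0]) :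
    IsUnit (Xᵀ * X).det ∧
    (σ ^ 2 • (Xᵀ * X)⁻¹) 2 2 = σ ^ 2 / (γ ^ 2 * (1 - γ) ^ 2) * ((1 - γ) ^ 2 / (n * q0) + 1 / (n * q1) + γ ^ 2 / (n * q2)) :=
  stmt_9_general γ σ hγ n0 n1 n2 h0 h1 h2 n hn q0 q1 q2 hq0 hq1 hq2 xval hxval X hX
end

section
/- Let γ_1 < γ_2 < ... < γ_K in (0,1), p_k > 0 with sum 1, A_k = p_k/γ_k², B_k = p_k/(1-γ_k)². With weights (a_0,a_1,a_2) nonnegative and not all zero, define d_0 = a_0 + (a_1+a_2)·sum_k A_k, d_k = a_1 A_k + a_2 A_k B_k / p_k for 1 ≤ k ≤ K, and d_{K+1} = a_2·sum_k B_k. Then the q defined by q_k = sqrt(d_k)/sum_j sqrt(d_j) (k = 0, ..., K+1) minimizes F(q) = sum_{k=0}^{K+1} d_k/q_k over positive vectors q = (q_0, ..., q_{K+1}) summing to 1, and F equals (up to additive constants and factor σ²/n) the objective a_0 Var(β̂_0) + a_1 Var(β̂_1) + a_2 Var(β̂_2) from equations (7)-(10) of the paper. -/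
open Finset

/-- Theorem 1 of the paper (unknown change-point): with `A_k = p_k/γ_k²`,
`B_k = p_k/(1-γ_k)²`, `d₀ = a₀ + (a₁+a₂)∑A_k`, `d_k = a₁A_k + a₂A_kB_k/p_k`,
`d_{K+1} = a₂∑B_k`, the vector `q_k = √d_k / ∑√d_j` minimizes
`F(q) = ∑_{k=0}^{K+1} d_k/q_k` over positive vectors summing to 1, and `F` equals,
up to an additive constant and the factor `σ²/n`, the objective
`a₀ Var(β̂₀) + a₁ Var(β̂₁) + a₂ Var(β̂₂)`. -/
theorem stmt_10 (K : ℕ) (hK : 0 < K) (γ p A B d : ℕ → ℝ)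
    (hγmem : ∀ k ∈ Finset.Icc 1 K, γ k ∈ Set.Ioo (0 : ℝ) 1)
    (hγmono : ∀ j ∈ Finset.Icc 1 K, ∀ k ∈ Finset.Icc 1 K, j < k → γ j < γ k)
    (hp : ∀ k ∈ Finset.Icc 1 K, 0 < p k)
    (hpsum : ∑ k ∈ Finset.Icc 1 K, p k = 1)
    (a0 a1 a2 : ℝ) (ha0 : 0 ≤ a0) (ha1 : 0 ≤ a1) (ha2 : 0 ≤ a2)
    (hne : a0 ≠ 0 ∨ a1 ≠ 0 ∨ a2 ≠ 0)
    (σ : ℝ) (hσ : 0 < σ) (n : ℕ) (hn : 0 < n) (c0 c1 c2 : ℝ)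
    (hA : ∀ k ∈ Finset.Icc 1 K, A k = p k / γ k ^ 2)
    (hB : ∀ k ∈ Finset.Icc 1 K, B k = p k / (1 - γ k) ^ 2)
    (hd0 : d 0 = a0 + (a1 + a2) * ∑ k ∈ Finset.Icc 1 K, A k)
    (hdk : ∀ k ∈ Finset.Icc 1 K, d k = a1 * A k + a2 * A k * B k / p k)
    (hdK : d (K + 1) = a2 * ∑ k ∈ Finset.Icc 1 K, B k)
    (qstar : ℕ → ℝ)
    (hqstar : ∀ k ∈ Finset.range (K + 2),
      qstar k = Real.sqrt (d k) / ∑ j ∈ Finset.range (K + 2), Real.sqrt (d j)) :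
    (∀ q : ℕ → ℝ, (∀ k ∈ Finset.range (K + 2), 0 < q k) →
      ∑ k ∈ Finset.range (K + 2), q k = 1 →
      ∑ k ∈ Finset.range (K + 2), d k / qstar k ≤
        ∑ k ∈ Finset.range (K + 2), d k / q k) ∧
    (∃ c : ℝ, ∀ q : ℕ → ℝ, (∀ k ∈ Finset.range (K + 2), 0 < q k) →
      ∑ k ∈ Finset.range (K + 2), q k = 1 →
      a0 * (c0 + σ ^ 2 / (n * q 0)) +
        a1 * (c1 + σ ^ 2 * ((∑ k ∈ Finset.Icc 1 K, A k) / (n * q 0) +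
          ∑ k ∈ Finset.Icc 1 K, A k / (n * q k))) +
        a2 * (c2 + σ ^ 2 * ((∑ k ∈ Finset.Icc 1 K, A k) / (n * q 0) +
          (∑ k ∈ Finset.Icc 1 K, A k * B k / (p k * n * q k)) +
          (∑ k ∈ Finset.Icc 1 K, B k) / (n * q (K + 1)))) =
      c + σ ^ 2 / n * ∑ k ∈ Finset.range (K + 2), d k / q k) := by
  -- basic positivity facts
  have hApos : ∀ k ∈ Finset.Icc 1 K, 0 < A k := by
    intro k hk
    rw [hA k hk]
    have h1 := hp k hk
    have h2 := (hγmem k hk).1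
    positivity
  have hBpos : ∀ k ∈ Finset.Icc 1 K, 0 < B k := by
    intro k hk
    rw [hB k hk]
    have h1 := hp k hk
    have h2 := (hγmem k hk).2
    have : (0:ℝ) < 1 - γ k := by linarith
    positivity
  have hne' : Finset.Nonempty (Finset.Icc 1 K) := ⟨1, Finset.mem_Icc.mpr ⟨le_rfl, hK⟩⟩
  have hSA : 0 < ∑ k ∈ Finset.Icc 1 K, A k := Finset.sum_pos hApos hne'
  have hSB : 0 < ∑ k ∈ Finset.Icc 1 K, B k := Finset.sum_pos hBpos hne'
  have hd0pos : 0 < d 0 := by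
    rw [hd0]
    rcases hne with h | h | h
    · have : 0 < a0 := lt_of_le_of_ne ha0 (Ne.symm h)
      nlinarith
    · have : 0 < a1 := lt_of_le_of_ne ha1 (Ne.symm h)
      nlinarith
    · have : 0 < a2 := lt_of_le_of_ne ha2 (Ne.symm h)
      nlinarith
  have hdnn : ∀ k ∈ Finset.range (K + 2), 0 ≤ d k := by
    intro k hk
    rw [Finset.mem_range] at hk
    rcases Nat.eq_zero_or_pos k with h0 | h0
    · subst h0; exact hd0pos.le
    rcases eq_or_lt_of_le (Nat.lt_succ_iff.mp hk) with hK1 | hK1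
    · rw [hK1, hdK]; exact mul_nonneg ha2 hSB.le
    · have hk' : k ∈ Finset.Icc 1 K := by
        rw [Finset.mem_Icc]; omega
      rw [hdk k hk']
      have := hApos k hk'
      have := hBpos k hk'
      have := hp k hk'
      positivity
  set S := ∑ j ∈ Finset.range (K + 2), Real.sqrt (d j) with hS_def
  have hSpos : 0 < S := by
    apply Finset.sum_pos' (fun i _ => Real.sqrt_nonneg _)
    exact ⟨0, by simp, Real.sqrt_pos.mpr hd0pos⟩
  have hFstar : ∑ k ∈ Finset.range (K + 2), d k / qstar k = S ^ 2 := by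
    have : ∀ k ∈ Finset.range (K + 2), d k / qstar k = Real.sqrt (d k) * S := by
      intro k hk
      rw [hqstar k hk]
      rcases eq_or_lt_of_le (hdnn k hk) with h | h
      · rw [← h]; simp
      · have hs : Real.sqrt (d k) ≠ 0 := (Real.sqrt_pos.mpr h).ne'
        rw [div_div_eq_mul_div, div_eq_iff hs]
        nlinarith [Real.mul_self_sqrt (hdnn k hk)]
    rw [Finset.sum_congr rfl this, ← Finset.sum_mul, ← hS_def, sq]
  constructor
  · intro q hq hq1
    rw [hFstar]
    have := sum_sq_le_sum_mul_sum_of_sq_eq_mul (Finset.range (K + 2))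
      (r := fun k => Real.sqrt (d k)) (f := fun k => d k / q k) (g := q)
      (fun i hi => div_nonneg (hdnn i hi) (hq i hi).le)
      (fun i hi => (hq i hi).le)
      (fun i hi => by
        rw [Real.sq_sqrt (hdnn i hi), div_mul_cancel₀ _ (hq i hi).ne'])
    rw [hq1, mul_one] at this
    exact this
  · refine ⟨a0 * c0 + a1 * c1 + a2 * c2, fun q hq hq1 => ?_⟩
    have hq0 : 0 < q 0 := hq 0 (by simp)
    have hqK : 0 < q (K + 1) := hq (K + 1) (by simp)
    have hnR : (0:ℝ) < (n:ℝ) := by exact_mod_cast hn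
    -- split the sum
    have hsplit : ∑ k ∈ Finset.range (K + 2), d k / q k =
        d 0 / q 0 + (∑ k ∈ Finset.Icc 1 K, d k / q k) + d (K + 1) / q (K + 1) := by
      rw [Finset.sum_range_succ, Finset.range_eq_Ico,
        Finset.sum_eq_sum_Ico_succ_bot (by omega), Finset.Ico_add_one_right_eq_Icc]
    have hsum_dq : ∑ k ∈ Finset.Icc 1 K, d k / q k =
        ∑ k ∈ Finset.Icc 1 K, (a1 * A k + a2 * A k * B k / p k) / q k :=
      Finset.sum_congr rfl fun k hk => by rw [hdk k hk]
    rw [hsplit, hd0, hdK, hsum_dq]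
    have e1 : ∑ k ∈ Finset.Icc 1 K, (a1 * A k + a2 * A k * B k / p k) / q k =
        a1 * (∑ k ∈ Finset.Icc 1 K, A k / q k) +
        a2 * (∑ k ∈ Finset.Icc 1 K, A k * B k / (p k * q k)) := by
      rw [Finset.mul_sum, Finset.mul_sum, ← Finset.sum_add_distrib]
      refine Finset.sum_congr rfl fun k hk => ?_
      have hpk : p k ≠ 0 := (hp k hk).ne'
      have hqk : q k ≠ 0 := (hq k (by rw [Finset.mem_range]; rw [Finset.mem_Icc] at hk; omega)).ne'
      field_simp
    rw [e1]
    have e2 : ∑ k ∈ Finset.Icc 1 K, A k / (↑n * q k) =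
        (∑ k ∈ Finset.Icc 1 K, A k / q k) / n := by
      rw [Finset.sum_div]
      exact Finset.sum_congr rfl fun k hk => by rw [div_div]; ring_nf
    have e3 : ∑ k ∈ Finset.Icc 1 K, A k * B k / (p k * ↑n * q k) =
        (∑ k ∈ Finset.Icc 1 K, A k * B k / (p k * q k)) / n := by
      rw [Finset.sum_div]
      exact Finset.sum_congr rfl fun k hk => by rw [div_div]; ring_nf
    rw [e2, e3]
    field_simp
    ring
end
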